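/- Let T be a self-adjoint operator on a finite-dimensional inner product space with α I ≤ T ≤ β I for 0 < α ≤ β, and let Ψ be a positive unital linear map on operators (e.g., Ψ(X) = S X S + A X A for complementary orthogonal projections S, A with S + A = I). Then Ψ(T)⁻² ≤ ((α+β)²/(4αβ)) Ψ(T⁻²). -/

import Mathlib

/-!
From `α ≤ T ≤ β` the commuting factors `T - α` and `β - T` are positive, so
`T² ≤ (α + β) T - αβ`. Applying the positive unital map `Ψ` and completing the square,
`Ψ(T²) ≤ (α + β) Ψ(T) - αβ ≤ ((α + β)² / (4αβ)) Ψ(T)²`. Inverting, which reverses the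
Loewner order, and using Choi's inequality `Ψ(T²)⁻¹ ≤ Ψ(T⁻²)` gives the bound.

Both the antitonicity of the inverse and Choi's inequality come from the Schur complement
criterion: for `P > 0`, the block matrix `[[P, 1], [1, Q]]` is positive iff `P⁻¹ ≤ Q`.
For Choi, apply `Ψ` blockwise to `[[X, 1], [1, X⁻¹]] ≥ 0`.
-/

open scoped MatrixOrder ComplexOrder
open Matrix

section OrderedAlgebra

variable {A : Type*} [Ring A] [PartialOrder A] [StarRing A] [StarOrderedRing A] [Algebra ℝ A]

theorem mul_self_le_of_smul_one_le_of_le_smul_one [TopologicalSpace A]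
    [ContinuousFunctionalCalculus ℝ A IsSelfAdjoint] [NonnegSpectrumClass ℝ A]
    {a : A} {α β : ℝ} (hα : α • 1 ≤ a) (hβ : a ≤ β • 1) :
    a * a ≤ (α + β) • a - (α * β) • 1 := by
  have hcomm : Commute (a - α • 1) (β • 1 - a) :=
    ((Commute.one_right a).smul_right β |>.sub_right (Commute.refl a)).sub_left
      ((Commute.one_left _).smul_left α)
  rw [← sub_nonneg]
  convert hcomm.mul_nonneg (sub_nonneg.2 hα) (sub_nonneg.2 hβ) using 1
  simp only [sub_mul, mul_sub, smul_mul_assoc, mul_smul_comm, one_mul, mul_one, add_smul]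
  module

theorem smul_sub_smul_one_le_smul_mul_self [StarModule ℝ A] [PosSMulMono ℝ A] {y : A}
    (hy : IsSelfAdjoint y) (b : ℝ) {c : ℝ} (hc : 0 < c) :
    b • y - c • 1 ≤ (b ^ 2 / (4 * c)) • (y * y) := by
  set h := b • y - (2 * c) • (1 : A)
  have hh : star h = h := by simp [h, hy.star_eq]
  have hsquare : (b ^ 2 / (4 * c)) • (y * y) - (b • y - c • 1) = (4 * c)⁻¹ • (star h * h) := by
    rw [hh]
    simp only [h, sub_mul, mul_sub, smul_mul_assoc, mul_smul_comm, one_mul, mul_one, smul_sub]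
    match_scalars <;> field_simp <;> ring
  rw [← sub_nonneg, hsquare]
  exact smul_nonneg (by positivity) (star_mul_self_nonneg h)

end OrderedAlgebra

namespace Matrix

variable {m 𝕜 : Type*} [Fintype m] [RCLike 𝕜]

/-- A completely positive map in Kraus form with two Kraus operators; the pinching
`X ↦ S X S + A X A` is the case `B = S`, `C = A`. -/
def krausMap (B C : Matrix m m 𝕜) : Matrix m m 𝕜 →ₗ[𝕜] Matrix m m 𝕜 where
  toFun X := Bᴴ * X * B + Cᴴ * X * C
  map_add' X Y := by noncomm_ring
  map_smul' c X := by simp only [Matrix.mul_smul, Matrix.smul_mul, smul_add, RingHom.id_apply]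

variable {B C X Y : Matrix m m 𝕜}

theorem krausMap_apply : krausMap B C X = Bᴴ * X * B + Cᴴ * X * C := rfl

theorem PosSemidef.krausMap (hX : X.PosSemidef) : (krausMap B C X).PosSemidef :=
  (hX.conjTranspose_mul_mul_same B).add (hX.conjTranspose_mul_mul_same C)

theorem krausMap_mono (h : X ≤ Y) : krausMap B C X ≤ krausMap B C Y := by
  rw [le_iff, ← map_sub]
  exact (le_iff.mp h).krausMap

theorem star_dotProduct_conjTranspose_mul_mul_mulVec (x : m → 𝕜) :
    star x ⬝ᵥ (Bᴴ * X * B) *ᵥ x = star (B *ᵥ x) ⬝ᵥ X *ᵥ (B *ᵥ x) := by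
  rw [star_mulVec, ← mulVec_mulVec, ← dotProduct_mulVec, ← mulVec_mulVec,
    dotProduct_mulVec (star x) Bᴴ]

variable [DecidableEq m]

theorem posSemidef_fromBlocks_one_iff₁₁ {P : Matrix m m 𝕜} (Q : Matrix m m 𝕜) (hP : P.PosDef) :
    (fromBlocks P 1 1 Q).PosSemidef ↔ P⁻¹ ≤ Q := by
  have := hP.isUnit.invertible
  simpa [le_iff] using PosDef.fromBlocks₁₁ 1 Q hP

theorem posSemidef_fromBlocks_one_iff₂₂ (P : Matrix m m 𝕜) {Q : Matrix m m 𝕜} (hQ : Q.PosDef) :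
    (fromBlocks P 1 1 Q).PosSemidef ↔ Q⁻¹ ≤ P := by
  have := hQ.isUnit.invertible
  simpa [le_iff] using PosDef.fromBlocks₂₂ P 1 hQ

theorem PosDef.inv_le_inv_of_le {P Q : Matrix m m 𝕜} (hP : P.PosDef) (h : P ≤ Q) :
    Q⁻¹ ≤ P⁻¹ := by
  have hQ : Q.PosDef := by simpa using hP.add_posSemidef (le_iff.mp h)
  have := hP.isUnit.invertible
  rw [← posSemidef_fromBlocks_one_iff₁₁ _ hQ, posSemidef_fromBlocks_one_iff₂₂ _ hP.inv,
    inv_inv_of_invertible]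
  exact h

theorem PosDef.krausMap (hΨ : krausMap B C 1 = 1) (hX : X.PosDef) : (krausMap B C X).PosDef := by
  refine .of_dotProduct_mulVec_pos hX.posSemidef.krausMap.isHermitian fun x hx => ?_
  rw [krausMap_apply, add_mulVec, dotProduct_add, star_dotProduct_conjTranspose_mul_mul_mulVec,
    star_dotProduct_conjTranspose_mul_mul_mulVec]
  by_cases hB : B *ᵥ x = 0
  · have hC : C *ᵥ x ≠ 0 := fun hC => hx <| by
      simpa [krausMap_apply, hB, hC, ← mulVec_mulVec, add_mulVec] using
        (congr_arg (· *ᵥ x) hΨ).symm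
    rw [hB]
    simpa using hX.dotProduct_mulVec_pos hC
  · exact add_pos_of_pos_of_nonneg (hX.dotProduct_mulVec_pos hB)
      (hX.posSemidef.dotProduct_mulVec_nonneg _)

theorem krausMap_inv_le (hΨ : krausMap B C 1 = 1) (hX : X.PosDef) :
    (krausMap B C X)⁻¹ ≤ krausMap B C X⁻¹ := by
  have hXX : (fromBlocks X 1 1 X⁻¹).PosSemidef := (posSemidef_fromBlocks_one_iff₁₁ _ hX).mpr le_rfl
  have hblock : fromBlocks (krausMap B C X) (krausMap B C 1) (krausMap B C 1)
      (krausMap B C X⁻¹) =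
      (fromBlocks B 0 0 B)ᴴ * fromBlocks X 1 1 X⁻¹ * fromBlocks B 0 0 B +
        (fromBlocks C 0 0 C)ᴴ * fromBlocks X 1 1 X⁻¹ * fromBlocks C 0 0 C := by
    simp [krausMap_apply, fromBlocks_conjTranspose, fromBlocks_multiply, fromBlocks_add]
  rw [← posSemidef_fromBlocks_one_iff₁₁ _ (hX.krausMap hΨ), ← hΨ, hblock]
  exact (hXX.conjTranspose_mul_mul_same _).add (hXX.conjTranspose_mul_mul_same _)

theorem inv_mul_inv_krausMap_le (hΨ : krausMap B C 1 = 1) {T : Matrix m m 𝕜} {α β : ℝ}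
    (hα : 0 < α) (hαβ : α ≤ β) (hTα : α • 1 ≤ T) (hTβ : T ≤ β • 1) :
    (krausMap B C T)⁻¹ * (krausMap B C T)⁻¹ ≤
      ((α + β) ^ 2 / (4 * α * β)) • krausMap B C (T⁻¹ * T⁻¹) := by
  set K := (α + β) ^ 2 / (4 * α * β)
  have hK : 0 < K := by have := hα.trans_le hαβ; positivity
  have hT : T.PosDef := by simpa using (PosDef.one.smul hα).add_posSemidef (le_iff.mp hTα)
  have hT2 : (T * T).PosDef := by
    simpa [hT.isHermitian.eq] using
      PosDef.conjTranspose_mul_self T (mulVec_injective_of_isUnit hT.isUnit)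
  have hT2Ψ := hT2.krausMap hΨ
  have hchord : krausMap B C (T * T) ≤ (α + β) • krausMap B C T - (α * β) • 1 := by
    simpa [LinearMap.map_smul_of_tower, hΨ] using
      krausMap_mono (B := B) (C := C) (mul_self_le_of_smul_one_le_of_le_smul_one hTα hTβ)
  have hsquare : (α + β) • krausMap B C T - (α * β) • 1 ≤
      K • (krausMap B C T * krausMap B C T) := by
    convert smul_sub_smul_one_le_smul_mul_self (hT.krausMap hΨ).isHermitian (α + β)
      (mul_pos hα (hα.trans_le hαβ)) using 2
    ring
  have hscaled : K⁻¹ • krausMap B C (T * T) ≤ krausMap B C T * krausMap B C T := by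
    rw [inv_smul_le_iff_of_pos hK]
    exact hchord.trans hsquare
  calc (krausMap B C T)⁻¹ * (krausMap B C T)⁻¹
      = (krausMap B C T * krausMap B C T)⁻¹ := (mul_inv_rev _ _).symm
    _ ≤ (K⁻¹ • krausMap B C (T * T))⁻¹ := (hT2Ψ.smul (inv_pos.2 hK)).inv_le_inv_of_le hscaled
    _ = K • (krausMap B C (T * T))⁻¹ := by
      refine inv_eq_left_inv ?_
      rw [smul_mul_smul_comm, mul_inv_cancel₀ hK.ne', one_smul,
        nonsing_inv_mul _ ((isUnit_iff_isUnit_det _).mp hT2Ψ.isUnit)]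
    _ ≤ K • krausMap B C (T * T)⁻¹ := smul_le_smul_of_nonneg_left (krausMap_inv_le hΨ hT2) hK.le
    _ = K • krausMap B C (T⁻¹ * T⁻¹) := by rw [mul_inv_rev]

end Matrix

theorem kantorovich_type_bound_for_pinching_general {n : ℕ}
    (S A T : Matrix (Fin n) (Fin n) ℝ)
    (hSH : S.IsHermitian) (hAH : A.IsHermitian)
    (hS2 : S * S = S) (hA2 : A * A = A) (hSum : S + A = 1)
    (α β : ℝ) (hα : 0 < α) (hαβ : α ≤ β)
    (hTα : (T - α • 1).PosSemidef) (hTβ : (β • 1 - T).PosSemidef) :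
    (((α + β) ^ 2 / (4 * α * β)) •
        (S * (T⁻¹ * T⁻¹) * S + A * (T⁻¹ * T⁻¹) * A) -
      ((S * T * S + A * T * A)⁻¹ * (S * T * S + A * T * A)⁻¹)).PosSemidef := by
  have hpinch (X : Matrix (Fin n) (Fin n) ℝ) : S * X * S + A * X * A = krausMap S A X := by
    rw [krausMap_apply, hSH.eq, hAH.eq]
  have hunital : krausMap S A 1 = 1 := by rw [← hpinch, mul_one, mul_one, hS2, hA2, hSum]
  rw [hpinch, hpinch, ← le_iff]
  exact inv_mul_inv_krausMap_le hunital hα hαβ (le_iff.mpr hTα) (le_iff.mpr hTβ)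

theorem kantorovich_type_bound_for_pinching {n : ℕ}
    (S A T : Matrix (Fin n) (Fin n) ℝ)
    (hSH : S.IsHermitian) (hAH : A.IsHermitian)
    (hS2 : S * S = S) (hA2 : A * A = A) (hSA : S * A = 0) (hSum : S + A = 1)
    (α β : ℝ) (hα : 0 < α) (hαβ : α ≤ β)
    (hT : T.IsHermitian)
    (hTα : (T - α • 1).PosSemidef) (hTβ : (β • 1 - T).PosSemidef) :
    (((α + β) ^ 2 / (4 * α * β)) •
        (S * (T⁻¹ * T⁻¹) * S + A * (T⁻¹ * T⁻¹) * A) -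
      ((S * T * S + A * T * A)⁻¹ * (S * T * S + A * T * A)⁻¹)).PosSemidef :=
  kantorovich_type_bound_for_pinching_general S A T hSH hAH hS2 hA2 hSum α β hα hαβ hTα hTβ
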